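/- arXiv:2510.24629 — 2 statements merged into one kernel-verified Lean document; each statement's English description precedes it below -/
import Mathlib

section
/- Let C be a small category, X a category, L : (Cᵒᵖ ⥤ Type) ⥤ X a left adjoint with fully faithful right adjoint i : X ⥤ (Cᵒᵖ ⥤ Type), and let x^* : X ⥤ Type be a colimit-preserving functor. Set f_x := yoneda ⋙ L ⋙ x^* : C ⥤ Type and N_C(x) := (Elements f_x)ᵒᵖ. Then for every object F of X there is an isomorphism x^*(F) ≅ colim over N_C(x) of the diagram sending (U, ξ) to Hom_X(L(yoneda.obj U), F) (where a morphism (U, ξ) → (U', ξ') of N_C(x), i.e. a morphism u : U' → U in C with f_x(u)(ξ') = ξ, acts by precomposition with L(yoneda.map u)), and this isomorphism is natural in F. -/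
/-!
Since `i` is fully faithful, the counit of `L ⊣ i` is an isomorphism, so `x^* ≅ i ⋙ L ⋙ x^*`.
The functor `P ↦ colim_{(U, ξ) ∈ N_C(x)} P(U)` preserves colimits and restricts along the
Yoneda embedding to `f_x` (co-Yoneda lemma); as a colimit-preserving functor out of presheaves
is determined by its restriction to representables, it is isomorphic to `L ⋙ x^*`. Finally, by
the adjunction and the Yoneda lemma, `i F` is the presheaf `U ↦ Hom_X(L(yoneda U), F)`.
-/

open CategoryTheory CategoryTheory.Limits

universe v u

namespace CategoryTheory

variable {C : Type u} [SmallCategory C]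

noncomputable section

/-- As `GrothendieckTopology.Point.presheafFiber`, for a bare functor `f` instead of a point. -/
def Functor.presheafFiber (f : C ⥤ Type u) : (Cᵒᵖ ⥤ Type u) ⥤ Type u :=
  (Functor.whiskeringLeft _ _ _).obj (CategoryOfElements.π f).op ⋙ colim

instance (f : C ⥤ Type u) : PreservesColimits f.presheafFiber := by
  unfold Functor.presheafFiber
  infer_instance

def Functor.yonedaCompPresheafFiberIso (f : C ⥤ Type u) : yoneda ⋙ f.presheafFiber ≅ f :=
  Functor.isoWhiskerRight shrinkYonedaIsoYoneda.symm _ ≪≫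
    Functor.Elements.shrinkYonedaCompWhiskeringLeftObjπCompColimIso f

def Presheaf.natIsoOfNatIsoOnRepresentables {E : Type v} [Category.{u} E]
    (G G' : (Cᵒᵖ ⥤ Type u) ⥤ E) [PreservesColimits G] [PreservesColimits G']
    (e : yoneda ⋙ G ≅ yoneda ⋙ G') : G ≅ G' :=
  let eG : uliftYoneda.{u} ⋙ G ≅ uliftYoneda.{u} ⋙ G := Iso.refl _
  let eG' : uliftYoneda.{u} ⋙ G ≅ uliftYoneda.{u} ⋙ G' :=
    Functor.isoWhiskerRight uliftYonedaIsoYoneda _ ≪≫ e ≪≫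
      Functor.isoWhiskerRight uliftYonedaIsoYoneda.symm _
  have := Presheaf.isLeftKanExtension_of_preservesColimits G eG
  have := Presheaf.isLeftKanExtension_of_preservesColimits G' eG'
  Functor.leftKanExtensionUnique G eG.hom G' eG'.hom

def Functor.presheafFiberIsoOfPreservesColimits (G : (Cᵒᵖ ⥤ Type u) ⥤ Type u)
    [PreservesColimits G] : (yoneda ⋙ G).presheafFiber ≅ G :=
  Presheaf.natIsoOfNatIsoOnRepresentables _ _ (yoneda ⋙ G).yonedaCompPresheafFiberIso

end

def Adjunction.rightAdjointIsoRestrictedYoneda {X : Type v} [Category.{u} X]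
    {L : (Cᵒᵖ ⥤ Type u) ⥤ X} {i : X ⥤ (Cᵒᵖ ⥤ Type u)} (adj : L ⊣ i) :
    i ≅ yoneda ⋙ (Functor.whiskeringLeft _ _ _).obj (yoneda ⋙ L).op :=
  i.rightUnitor.symm ≪≫ Functor.isoWhiskerLeft i curriedYonedaLemma'.symm ≪≫
    (Functor.associator _ _ _).symm ≪≫ Functor.isoWhiskerRight adj.compYonedaIso _

end CategoryTheory

theorem stmt2 {C : Type u} [SmallCategory C] {X : Type v} [Category.{u} X]
    (L : (Cᵒᵖ ⥤ Type u) ⥤ X) (i : X ⥤ (Cᵒᵖ ⥤ Type u)) (adj : L ⊣ i)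
    [i.Full] [i.Faithful]
    (xs : X ⥤ Type u) [PreservesColimits xs] :
    Nonempty (xs ≅ yoneda ⋙
      (Functor.whiskeringLeft ((yoneda ⋙ L ⋙ xs).Elements)ᵒᵖ Xᵒᵖ (Type u)).obj
        ((CategoryOfElements.π (yoneda ⋙ L ⋙ xs)).op ⋙ (yoneda ⋙ L).op) ⋙ colim) := by
  have := adj.leftAdjoint_preservesColimits
  have := adj.counit_isIso_of_R_fully_faithful
  refine ⟨?_⟩
  calc xs ≅ i ⋙ L ⋙ xs := (Functor.isoWhiskerRight (asIso adj.counit) xs).symm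
    _ ≅ i ⋙ (yoneda ⋙ L ⋙ xs).presheafFiber :=
      Functor.isoWhiskerLeft i (Functor.presheafFiberIsoOfPreservesColimits (L ⋙ xs)).symm
    -- the target is `(yoneda ⋙ (whiskeringLeft _ _ _).obj (yoneda ⋙ L).op) ⋙ presheafFiber _`
    _ ≅ _ := Functor.isoWhiskerRight adj.rightAdjointIsoRestrictedYoneda _
end

section
/- Let 𝒞 be a category with finite products (in particular a terminal object ⊤_𝒞) and 𝒟 a cartesian closed category. Suppose given an adjoint triple f_♯ ⊣ f^* ⊣ f_*, where f_♯ : 𝒞 ⥤ 𝒟, f^* : 𝒟 ⥤ 𝒞, f_* : 𝒞 ⥤ 𝒟, and suppose that for all objects A of 𝒞 and B of 𝒟 the projection-formula morphism f_♯(A ⨯ f^*(B)) → f_♯(A) ⨯ B is an isomorphism. Then there is a natural isomorphism of functors f_* ∘ f^* ≅ (f_♯(⊤_𝒞) ⟹ −) : 𝒟 ⥤ 𝒟, i.e. the composite f_* f^* is corepresented internally by the object f_♯(⊤_𝒞). -/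
/-!
Right adjoints are unique up to isomorphism, so from the composite adjunction `f_♯ f^* ⊣ f_* f^*`
it suffices to identify `f_♯ f^*` with `f_♯(⊤) ⊗ −`, the left adjoint of `(f_♯(⊤) ⟹ −)`.
That identification is the projection formula at `A = ⊤`:
`f_♯ f^* B ≅ f_♯(⊤ ⊗ f^* B) ≅ f_♯(⊤) ⊗ B`.
-/

open CategoryTheory CategoryTheory.Limits MonoidalCategory

universe v u u'

namespace CategoryTheory

open CartesianMonoidalCategory

variable {C : Type u} [Category.{v} C] {D : Type u'} [Category.{v} D]
  [CartesianMonoidalCategory C] [CartesianMonoidalCategory D]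

variable (C) in
noncomputable def tensorLeftTerminalIso : tensorLeft (⊤_ C) ≅ 𝟭 C :=
  (curriedTensor C).mapIso (terminalIsoIsTerminal isTerminalTensorUnit) ≪≫ leftUnitorNatIso C

namespace Adjunction

variable {L : C ⥤ D} {R : D ⥤ C}

def projectionFormula (h : L ⊣ R) (A : C) : R ⋙ tensorLeft A ⋙ L ⟶ tensorLeft (L.obj A) :=
  R.whiskerLeft (prodComparisonNatTrans L A) ≫ Functor.whiskerRight h.counit (tensorLeft (L.obj A))

lemma projectionFormula_app (h : L ⊣ R) (A : C) (B : D) :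
    (h.projectionFormula A).app B =
      lift (L.map (fst A (R.obj B))) (L.map (snd A (R.obj B)) ≫ h.counit.app B) := by
  apply hom_ext <;> simp [projectionFormula]

noncomputable def compIsoTensorLeft (h : L ⊣ R)
    [IsIso (h.projectionFormula (⊤_ C))] : R ⋙ L ≅ tensorLeft (L.obj (⊤_ C)) :=
  R.isoWhiskerLeft (Functor.isoWhiskerRight (tensorLeftTerminalIso C).symm L) ≪≫
    asIso (h.projectionFormula (⊤_ C))

end Adjunction

end CategoryTheory

theorem stmt5 {C : Type u} [Category.{v} C] {D : Type u'} [Category.{v} D]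
    [CartesianMonoidalCategory C] [CartesianMonoidalCategory D] [MonoidalClosed D]
    (fShriek : C ⥤ D) (fStar : D ⥤ C) (fLower : C ⥤ D)
    (adj₁ : fShriek ⊣ fStar) (adj₂ : fStar ⊣ fLower)
    (hproj : ∀ (A : C) (B : D),
      IsIso (CartesianMonoidalCategory.lift
        (fShriek.map (CartesianMonoidalCategory.fst A (fStar.obj B)))
        (fShriek.map (CartesianMonoidalCategory.snd A (fStar.obj B)) ≫ adj₁.counit.app B))) :
    Nonempty (fStar ⋙ fLower ≅ ihom (fShriek.obj (⊤_ C))) := by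
  have : IsIso (adj₁.projectionFormula (⊤_ C)) := by
    simpa only [NatTrans.isIso_iff_isIso_app, Adjunction.projectionFormula_app] using hproj (⊤_ C)
  exact ⟨((adj₂.comp adj₁).ofNatIsoLeft adj₁.compIsoTensorLeft).rightAdjointUniq
    (ihom.adjunction (fShriek.obj (⊤_ C)))⟩
end
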